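/- Let A be an n-state DFA admitting an efficient 1-contracting collection W (each word in W has length at most n) whose induced state map is a cyclic permutation. Then for every nonempty subset S ⊆ Q of size k, there exists a word w_S of length at most n(n − k) with δ(Q, w_S) = S. -/
import Mathlib

def dfaRun {Q A : Type*} (δ : Q → A → Q) (q : Q) (w : List A) : Q := w.foldl δ q

def IsCyclicMap {Q : Type*} [Fintype Q] (σ : Q → Q) : Prop :=
  σ^[Fintype.card Q] = id ∧ ∀ q : Q, ∀ k : ℕ, 1 ≤ k → k < Fintype.card Q → σ^[k] q ≠ q

lemma cyclic_boundary {Q : Type*} [Fintype Q] [DecidableEq Q] (σ : Q → Q)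
    (hcyc : IsCyclicMap σ) (S : Finset Q) (hS : S.Nonempty) (hne : S ≠ Finset.univ) :
    ∃ q, q ∉ S ∧ σ q ∈ S := by
  by_contra h
  push_neg at h
  obtain ⟨c, hc⟩ : ∃ c, c ∉ S := by
    by_contra hall
    push_neg at hall
    exact hne (Finset.eq_univ_iff_forall.mpr hall)
  set n := Fintype.card Q with hn
  have horb : ∀ k, σ^[k] c ∉ S := by
    intro k
    induction k with
    | zero => simpa using hc
    | succ k ih =>
      rw [Function.iterate_succ_apply']
      exact fun hmem => (h _ ih hmem)
  have key : ∀ i j, i < j → j < n → σ^[i] c ≠ σ^[j] c := by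
    intro i j hij hj heq
    have h2 := congrArg (σ^[n - j]) heq
    rw [← Function.iterate_add_apply, ← Function.iterate_add_apply] at h2
    have hnj : n - j + j = n := by omega
    rw [hnj, hcyc.1] at h2
    exact hcyc.2 c (n - j + i) (by omega) (by omega) (by simpa using h2)
  have hinj : Function.Injective (fun k : Fin n => σ^[(k : ℕ)] c) := by
    intro i j heq
    by_contra hne'
    rcases lt_trichotomy (i : ℕ) (j : ℕ) with hlt | heq' | hgt
    · exact key i j hlt j.isLt heq
    · exact hne' (Fin.ext heq')
    · exact key j i hgt i.isLt heq.symm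
  have hsurj : Function.Surjective (fun k : Fin n => σ^[(k : ℕ)] c) := by
    have := (Fintype.bijective_iff_injective_and_card (fun k : Fin n => σ^[(k : ℕ)] c)).mpr
      ⟨hinj, by simp [hn]⟩
    exact this.2
  obtain ⟨s, hs⟩ := hS
  obtain ⟨k, hk⟩ := hsurj s
  simp only [] at hk; exact horb k (hk.symm ▸ hs)

/-- With an efficient `1`-contracting collection whose state map is a cyclic
    permutation, every nonempty `k`-subset is reachable by a word of length
    at most `n(n − k)`. -/
theorem stmt11 {Q A : Type*} [Fintype Q] [DecidableEq Q]
    (δ : Q → A → Q) (w : Q → List A) (σ : Q → Q)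
    (hdef : ∀ q : Q, Finset.univ.image (fun p => dfaRun δ p (w q)) = Finset.univ \ {q})
    (heff : ∀ q : Q, (w q).length ≤ Fintype.card Q)
    (hcontr : ∀ q : Q, (Finset.univ.filter (fun p => dfaRun δ p (w q) = σ q)).card = 2)
    (hcyc : IsCyclicMap σ)
    (S : Finset Q) (hS : S.Nonempty) :
    ∃ wS : List A, wS.length ≤ Fintype.card Q * (Fintype.card Q - S.card) ∧
      Finset.univ.image (fun p => dfaRun δ p wS) = S := by
  set n := Fintype.card Q with hn
  suffices H : ∀ m : ℕ, ∀ S : Finset Q, S.Nonempty → n - S.card ≤ m →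
      ∃ wS : List A, wS.length ≤ n * m ∧
        Finset.univ.image (fun p => dfaRun δ p wS) = S by
    exact H (n - S.card) S hS le_rfl
  intro m
  induction m with
  | zero =>
    intro S hS' hle
    have hcard : S.card = n := le_antisymm (Finset.card_le_univ S) (by omega)
    have : S = Finset.univ := Finset.eq_univ_of_card S hcard
    subst this
    refine ⟨[], by simp, ?_⟩
    simp [dfaRun]
  | succ m ih =>
    intro S hS' hle
    by_cases hcase : n - S.card ≤ m
    · obtain ⟨wS, hlen, himg⟩ := ih S hS' hcase
      exact ⟨wS, le_trans hlen (Nat.mul_le_mul_left n (Nat.le_succ m)), himg⟩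
    · have hSlt : S.card < n := by
        have := Finset.card_le_univ S
        omega
      have hSne : S ≠ Finset.univ := by
        intro h; rw [h, Finset.card_univ] at hSlt; omega
      obtain ⟨q, hq, hσq⟩ := cyclic_boundary σ hcyc S hS' hSne
      set f := fun p => dfaRun δ p (w q) with hf
      set S' := Finset.univ.filter (fun p => f p ∈ S) with hS'def
      have himgS' : S'.image f = S := by
        apply Finset.Subset.antisymm
        · intro y hy
          obtain ⟨p, hp, hfp⟩ := Finset.mem_image.mp hy
          rw [hS'def, Finset.mem_filter] at hp
          exact hfp ▸ hp.2
        · intro y hy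
          have hyq : y ≠ q := fun h => hq (h ▸ hy)
          have : y ∈ Finset.univ.image f := by
            rw [hf, hdef q]
            simp [hyq]
          obtain ⟨p, _, hfp⟩ := Finset.mem_image.mp this
          exact Finset.mem_image.mpr ⟨p, by rw [hS'def]; simp [hfp, hy], hfp⟩
      -- card bound
      have hT1 : (S'.filter (fun p => f p = σ q)).card = 2 := by
        have : S'.filter (fun p => f p = σ q) = Finset.univ.filter (fun p => f p = σ q) := by
          ext p
          simp only [hS'def, Finset.mem_filter, Finset.mem_univ, true_and]
          constructor
          · rintro ⟨_, h2⟩; exact h2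
          · intro h2; exact ⟨h2 ▸ hσq, h2⟩
        rw [this]
        exact hcontr q
      have hT2 : S.card - 1 ≤ (S'.filter (fun p => ¬ f p = σ q)).card := by
        have hsub : S.erase (σ q) ⊆ (S'.filter (fun p => ¬ f p = σ q)).image f := by
          intro y hy
          rw [Finset.mem_erase] at hy
          have hyq : y ≠ q := fun h => hq (h ▸ hy.2)
          have : y ∈ Finset.univ.image f := by
            rw [hf, hdef q]; simp [hyq]
          obtain ⟨p, _, hfp⟩ := Finset.mem_image.mp this
          refine Finset.mem_image.mpr ⟨p, ?_, hfp⟩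
          rw [Finset.mem_filter, hS'def, Finset.mem_filter]
          exact ⟨⟨Finset.mem_univ p, by simp [hfp, hy.2]⟩, by rw [hfp]; exact hy.1⟩
        calc S.card - 1 = (S.erase (σ q)).card := by
              rw [Finset.card_erase_of_mem hσq]
          _ ≤ ((S'.filter (fun p => ¬ f p = σ q)).image f).card := Finset.card_le_card hsub
          _ ≤ (S'.filter (fun p => ¬ f p = σ q)).card := Finset.card_image_le
      have hcardS' : S.card + 1 ≤ S'.card := by
        have hsplit := Finset.card_filter_add_card_filter_not
          (s := S') (p := fun p => f p = σ q)
        have hS1 : 1 ≤ S.card := Finset.card_pos.mpr hS'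
        omega
      have hS'ne : S'.Nonempty := Finset.card_pos.mp (by omega)
      obtain ⟨w', hlen', himg'⟩ := ih S' hS'ne (by omega)
      refine ⟨w' ++ w q, ?_, ?_⟩
      · rw [List.length_append]
        have := heff q
        calc w'.length + (w q).length ≤ n * m + n := by omega
          _ = n * (m + 1) := by ring
      · have hstep : ∀ p, dfaRun δ p (w' ++ w q) = f (dfaRun δ p w') := by
          intro p; simp [dfaRun, List.foldl_append, hf]
        calc Finset.univ.image (fun p => dfaRun δ p (w' ++ w q))
            = Finset.univ.image (fun p => f (dfaRun δ p w')) := by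
              apply Finset.image_congr; intro p _; exact hstep p
          _ = (Finset.univ.image (fun p => dfaRun δ p w')).image f := by
              rw [Finset.image_image]; rfl
          _ = S'.image f := by rw [himg']
          _ = S := himgS'
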